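/- Let X₁ = −(y+w)∂_x + (x+z)∂_y + (y+w)∂_z − (x+z)∂_w and X₂ = −(y−w)∂_x + (x+z)∂_y + (y−w)∂_z + (x+z)∂_w be derivations on ℝ[x,y,z,w]. Then the polynomials e = x + z and f = w² − y² − 2x(x+z) satisfy X₁(e) = X₂(e) = 0 and X₁(f) = X₂(f) = 0; moreover every polynomial in the subalgebra generated by e and f is annihilated by both X₁ and X₂. -/

import Mathlib

open MvPolynomial

/-!
Both operators are derivations `∑ i, vᵢ ∂ᵢ`, so their kernels are subalgebras and it suffices
to check the generators `e` and `f`; by the Leibniz rule this only needs the images `vᵢ` of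
the coordinates.
-/

/-- The derivation `X₁ = −(y+w)∂_x + (x+z)∂_y + (y+w)∂_z − (x+z)∂_w` on `ℝ[x,y,z,w]`
(variables `x, y, z, w` indexed `0, 1, 2, 3`). -/
noncomputable def X1der (p : MvPolynomial (Fin 4) ℝ) : MvPolynomial (Fin 4) ℝ :=
  -(X 1 + X 3) * pderiv 0 p + (X 0 + X 2) * pderiv 1 p +
    (X 1 + X 3) * pderiv 2 p - (X 0 + X 2) * pderiv 3 p

/-- The derivation `X₂ = −(y−w)∂_x + (x+z)∂_y + (y−w)∂_z + (x+z)∂_w` on `ℝ[x,y,z,w]`. -/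
noncomputable def X2der (p : MvPolynomial (Fin 4) ℝ) : MvPolynomial (Fin 4) ℝ :=
  -(X 1 - X 3) * pderiv 0 p + (X 0 + X 2) * pderiv 1 p +
    (X 1 - X 3) * pderiv 2 p + (X 0 + X 2) * pderiv 3 p

namespace MvPolynomial

variable {σ R : Type*} [Fintype σ] [CommSemiring R]

noncomputable def vectorField (v : σ → MvPolynomial σ R) :
    Derivation R (MvPolynomial σ R) (MvPolynomial σ R) :=
  ∑ i, v i • pderiv i

theorem vectorField_apply (v : σ → MvPolynomial σ R) (p : MvPolynomial σ R) :
    vectorField v p = ∑ i, v i * pderiv i p := by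
  change Derivation.coeFnAddMonoidHom (∑ i, v i • pderiv i) p = _
  simp only [map_sum, Derivation.coeFnAddMonoidHom_apply, Derivation.coe_smul, Finset.sum_apply,
    Pi.smul_apply, smul_eq_mul]

theorem vectorField_X [DecidableEq σ] (v : σ → MvPolynomial σ R) (j : σ) :
    vectorField v (X j) = v j := by
  simp [vectorField_apply, pderiv_X, Pi.single_apply]

end MvPolynomial

theorem Derivation.eq_zero_of_mem_adjoin {R A M : Type*} [CommSemiring R] [CommSemiring A]
    [Algebra R A] [AddCommMonoid M] [Module A M] [Module R M] [IsScalarTower R A M]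
    (D : Derivation R A M) {s : Set A} (hs : ∀ a ∈ s, D a = 0) {p : A}
    (hp : p ∈ Algebra.adjoin R s) : D p = 0 :=
  Derivation.eqOn_adjoin (D2 := 0) hs hp

noncomputable def derivationX1 : Derivation ℝ (MvPolynomial (Fin 4) ℝ) (MvPolynomial (Fin 4) ℝ) :=
  vectorField ![-(X 1 + X 3), X 0 + X 2, X 1 + X 3, -(X 0 + X 2)]

noncomputable def derivationX2 : Derivation ℝ (MvPolynomial (Fin 4) ℝ) (MvPolynomial (Fin 4) ℝ) :=
  vectorField ![-(X 1 - X 3), X 0 + X 2, X 1 - X 3, X 0 + X 2]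

theorem X1der_eq_derivationX1 : X1der = derivationX1 := by
  funext p
  simp only [X1der, derivationX1, vectorField_apply, Fin.sum_univ_four, Matrix.cons_val_zero,
    Matrix.cons_val_one, Matrix.cons_val]
  ring

theorem X2der_eq_derivationX2 : X2der = derivationX2 := by
  funext p
  simp only [X2der, derivationX2, vectorField_apply, Fin.sum_univ_four, Matrix.cons_val_zero,
    Matrix.cons_val_one, Matrix.cons_val]

theorem derivationX1_e : derivationX1 (X 0 + X 2) = 0 := by
  simp [derivationX1, vectorField_X]

theorem derivationX2_e : derivationX2 (X 0 + X 2) = 0 := by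
  simp [derivationX2, vectorField_X]

theorem derivationX1_f :
    derivationX1 (X 3 ^ 2 - X 1 ^ 2 - 2 * X 0 * (X 0 + X 2)) = 0 := by
  simp [derivationX1, vectorField_X, two_mul, Derivation.leibniz, Derivation.leibniz_pow]
  ring

theorem derivationX2_f :
    derivationX2 (X 3 ^ 2 - X 1 ^ 2 - 2 * X 0 * (X 0 + X 2)) = 0 := by
  simp [derivationX2, vectorField_X, two_mul, Derivation.leibniz, Derivation.leibniz_pow]
  ring

/-- The polynomials `e = x + z` and `f = w² − y² − 2x(x+z)` are joint invariants of the
derivations `X₁` and `X₂`, and so is every polynomial in the subalgebra they generate. -/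
theorem joint_invariants_of_so22_nilpotents :
    X1der (X 0 + X 2) = 0 ∧ X2der (X 0 + X 2) = 0 ∧
    X1der (X 3 ^ 2 - X 1 ^ 2 - 2 * X 0 * (X 0 + X 2)) = 0 ∧
    X2der (X 3 ^ 2 - X 1 ^ 2 - 2 * X 0 * (X 0 + X 2)) = 0 ∧
    ∀ p ∈ Algebra.adjoin ℝ
        ({X 0 + X 2, X 3 ^ 2 - X 1 ^ 2 - 2 * X 0 * (X 0 + X 2)} :
          Set (MvPolynomial (Fin 4) ℝ)),
      X1der p = 0 ∧ X2der p = 0 := by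
  rw [X1der_eq_derivationX1, X2der_eq_derivationX2]
  refine ⟨derivationX1_e, derivationX2_e, derivationX1_f, derivationX2_f, fun p hp => ⟨?_, ?_⟩⟩
  · refine derivationX1.eq_zero_of_mem_adjoin ?_ hp
    rintro a (rfl | rfl)
    exacts [derivationX1_e, derivationX1_f]
  · refine derivationX2.eq_zero_of_mem_adjoin ?_ hp
    rintro a (rfl | rfl)
    exacts [derivationX2_e, derivationX2_f]
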